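/- Let T be a nonzero hyponormal absolutely norm attaining operator on a complex Hilbert space H with σ_ess(|T|) = {‖T‖}, and suppose that π_00(|T|) is empty. Then T = ‖T‖ S_0 for some isometry S_0 on H; in particular ‖Tx‖ = ‖T‖·‖x‖ for all x ∈ H. -/

import Mathlib

noncomputable section

variable {H : Type*} [NormedAddCommGroup H] [InnerProductSpace ℂ H] [CompleteSpace H]

/-- The restriction of `T` to the subspace `M` attains its norm:
there is a unit vector `x ∈ M` with `‖T x‖ = sup {‖T y‖ : y ∈ M, ‖y‖ = 1}`. -/
def NormAttainingOn (T : H →L[ℂ] H) (M : Submodule ℂ H) : Prop :=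
  ∃ x ∈ M, ‖x‖ = 1 ∧ ‖T x‖ = sSup {r : ℝ | ∃ y ∈ M, ‖y‖ = 1 ∧ r = ‖T y‖}

/-- `T` is absolutely norm attaining (an `𝒜𝒩`-operator): its restriction to every
nonzero closed subspace attains its norm. -/
def IsANOperator (T : H →L[ℂ] H) : Prop :=
  ∀ M : Submodule ℂ H, IsClosed (M : Set H) → M ≠ ⊥ → NormAttainingOn T M

/-- The restriction of `T` to the subspace `M` attains its minimum modulus. -/
def MinAttainingOn (T : H →L[ℂ] H) (M : Submodule ℂ H) : Prop :=
  ∃ x ∈ M, ‖x‖ = 1 ∧ ‖T x‖ = sInf {r : ℝ | ∃ y ∈ M, ‖y‖ = 1 ∧ r = ‖T y‖}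

/-- `T` is absolutely minimum attaining (an `𝒜ℳ`-operator). -/
def IsAMOperator (T : H →L[ℂ] H) : Prop :=
  ∀ M : Submodule ℂ H, IsClosed (M : Set H) → M ≠ ⊥ → MinAttainingOn T M

/-- A Fredholm operator: closed range and finite dimensional kernel and co-kernel
(kernel of the adjoint). -/
def IsFredholmOp (T : H →L[ℂ] H) : Prop :=
  IsClosed (LinearMap.range (T : H →ₗ[ℂ] H) : Set H) ∧
    FiniteDimensional ℂ (LinearMap.ker (T : H →ₗ[ℂ] H)) ∧
    FiniteDimensional ℂ (LinearMap.ker ((ContinuousLinearMap.adjoint T : H →L[ℂ] H) : H →ₗ[ℂ] H))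

/-- The essential spectrum: the set of `z` such that `T - z I` is not Fredholm. -/
def essSpectrum (T : H →L[ℂ] H) : Set ℂ :=
  {z : ℂ | ¬ IsFredholmOp (T - z • (1 : H →L[ℂ] H))}

/-- The Fredholm index `dim N(T) - dim N(T*)`. -/
def fredholmIndex (T : H →L[ℂ] H) : ℤ :=
  (Module.finrank ℂ (LinearMap.ker (T : H →ₗ[ℂ] H)) : ℤ) -
    (Module.finrank ℂ (LinearMap.ker ((ContinuousLinearMap.adjoint T : H →L[ℂ] H) : H →ₗ[ℂ] H)) : ℤ)

/-- The Weyl spectrum: the set of `z` such that `T - z I` is not Fredholm of index `0`. -/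
def weylSpectrum (T : H →L[ℂ] H) : Set ℂ :=
  {z : ℂ | ¬ (IsFredholmOp (T - z • (1 : H →L[ℂ] H)) ∧
      fredholmIndex (T - z • (1 : H →L[ℂ] H)) = 0)}

/-- `T` is hyponormal: `T*T - TT* ≥ 0`. -/
def Hyponormal (T : H →L[ℂ] H) : Prop :=
  (ContinuousLinearMap.adjoint T * T - T * ContinuousLinearMap.adjoint T).IsPositive

/-- `T` is paranormal: `‖T x‖² ≤ ‖T² x‖ ‖x‖` for all `x`. -/
def Paranormal (T : H →L[ℂ] H) : Prop :=
  ∀ x : H, ‖T x‖ ^ 2 ≤ ‖T (T x)‖ * ‖x‖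

/-- `|T|`, the unique positive square root of `T*T`. -/
def opAbs (T : H →L[ℂ] H) : H →L[ℂ] H :=
  CFC.sqrt (ContinuousLinearMap.adjoint T * T)

/-- `π₀₀(T)`: the set of isolated eigenvalues of `T` of finite multiplicity. -/
def pi00 (T : H →L[ℂ] H) : Set ℂ :=
  {z : ℂ | z ∈ spectrum ℂ T ∧
    (∃ U : Set ℂ, IsOpen U ∧ U ∩ spectrum ℂ T = {z}) ∧
    LinearMap.ker ((T - z • (1 : H →L[ℂ] H) : H →L[ℂ] H) : H →ₗ[ℂ] H) ≠ ⊥ ∧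
    FiniteDimensional ℂ (LinearMap.ker ((T - z • (1 : H →L[ℂ] H) : H →L[ℂ] H) : H →ₗ[ℂ] H))}

/-!
`|T|` is self-adjoint, and for a normal operator `A` every spectral point `z` at which `A - z` is
Fredholm lies in `π₀₀(A)`: `A - z` is bounded below on the orthocomplement of its kernel, hence
`A - μ` is bounded below, so invertible, for every `μ ≠ z` close to `z`, and `ker (A - z) ≠ 0`
because otherwise `A - z` itself would be invertible. Therefore
`σ(|T|) ⊆ σ_ess(|T|) ∪ π₀₀(|T|) = {‖T‖}`, so `|T| = ‖T‖ I` and `‖T x‖ = ‖|T| x‖ = ‖T‖ ‖x‖`.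
-/

open ContinuousLinearMap Submodule

section
variable {𝕜 E F : Type*} [RCLike 𝕜] [NormedAddCommGroup E] [InnerProductSpace 𝕜 E]
  [CompleteSpace E] [NormedAddCommGroup F] [InnerProductSpace 𝕜 F] [CompleteSpace F]

theorem IsStarNormal.isUnit_of_mul_norm_le {B : E →L[𝕜] E} (hB : IsStarNormal B) {δ : ℝ}
    (hδ : 0 < δ) (h : ∀ x, δ * ‖x‖ ≤ ‖B x‖) : IsUnit B := by
  have hanti : AntilipschitzWith (Real.toNNReal δ⁻¹) B := B.antilipschitz_of_bound fun x => by
    rw [Real.coe_toNNReal _ (inv_nonneg.2 hδ.le), inv_mul_eq_div, le_div_iff₀ hδ]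
    linarith [h x]
  refine isUnit_iff_bijective.2 ((bijective_iff_dense_range_and_antilipschitz B).2 ⟨?_, _, hanti⟩)
  rw [topologicalClosure_eq_top_iff, hB.orthogonal_range, LinearMap.ker_eq_bot]
  exact hanti.injective

theorem exists_mul_norm_le_of_mem_orthogonal_ker (B : E →L[𝕜] F)
    (hB : IsClosed (B.range : Set F)) : ∃ δ > 0, ∀ p ∈ B.kerᗮ, δ * ‖p‖ ≤ ‖B p‖ := by
  set f : B.kerᗮ →L[𝕜] F := B ∘L B.kerᗮ.subtypeL
  have hinj : Function.Injective f := by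
    refine (injective_iff_map_eq_zero f).2 fun p hp => ?_
    exact Subtype.ext (inner_self_eq_zero.1 (p.2 p hp))
  have hrange : Set.range f = B.range := by
    refine subset_antisymm (Set.range_subset_iff.2 fun p => ⟨p, rfl⟩) ?_
    rintro _ ⟨x, rfl⟩
    obtain ⟨k, hk, p, hp, rfl⟩ := B.ker.exists_add_mem_mem_orthogonal x
    exact ⟨⟨p, hp⟩, by simp [f, show B k = 0 from hk]⟩
  obtain ⟨c, hc⟩ := f.antilipschitz_of_injective_of_isClosed_range hinj (hrange ▸ hB)
  refine ⟨(c + 1)⁻¹, by positivity, fun p hp => ?_⟩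
  have hle : ‖p‖ ≤ c * ‖B p‖ := by simpa [dist_eq_norm, f] using hc.le_mul_dist ⟨p, hp⟩ 0
  rw [inv_mul_le_iff₀ (by positivity)]
  nlinarith [norm_nonneg p, norm_nonneg (B p)]

theorem IsStarNormal.apply_mem_orthogonal_ker {B : E →L[𝕜] E} (hB : IsStarNormal B) (x : E) :
    B x ∈ B.kerᗮ := by
  rw [← hB.orthogonal_range]
  exact B.range.le_orthogonal_orthogonal ⟨x, rfl⟩

theorem IsStarNormal.norm_mul_le_norm_sub_smul_apply {B : E →L[𝕜] E} (hB : IsStarNormal B)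
    {δ : ℝ} (hlb : ∀ p ∈ B.kerᗮ, δ * ‖p‖ ≤ ‖B p‖) {w : 𝕜} (hw : 2 * ‖w‖ ≤ δ) (x : E) :
    ‖w‖ * ‖x‖ ≤ ‖(B - w • 1) x‖ := by
  -- `B - w` acts as `-w` on `ker B` and maps `(ker B)ᗮ` into itself with lower bound `δ - ‖w‖`.
  obtain ⟨k, hk, p, hp, rfl⟩ := B.ker.exists_add_mem_mem_orthogonal x
  have hBk : B k = 0 := hk
  have hsplit : (B - w • 1) (k + p) = -(w • k) + (B p - w • p) := by
    simp [hBk]; abel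
  have hp' : ‖w‖ * ‖p‖ ≤ ‖B p - w • p‖ := by
    have htri := norm_sub_norm_le (B p) (w • p)
    rw [norm_smul] at htri
    nlinarith [hlb p hp, norm_nonneg p, norm_nonneg w]
  have hkp : inner 𝕜 k p = 0 := inner_right_of_mem_orthogonal hk hp
  have horth : inner 𝕜 (-(w • k)) (B p - w • p) = 0 :=
    inner_right_of_mem_orthogonal (B.ker.neg_mem (B.ker.smul_mem w hk))
      (B.kerᗮ.sub_mem (hB.apply_mem_orthogonal_ker p) (B.kerᗮ.smul_mem w hp))
  have hsq : (‖w‖ * ‖k + p‖) ^ 2 ≤ ‖(B - w • 1) (k + p)‖ ^ 2 := by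
    rw [hsplit, sq, sq, norm_add_sq_eq_norm_sq_add_norm_sq_of_inner_eq_zero _ _ horth,
      mul_mul_mul_comm, norm_add_sq_eq_norm_sq_add_norm_sq_of_inner_eq_zero _ _ hkp, norm_neg,
      norm_smul]
    nlinarith [mul_le_mul hp' hp' (by positivity) (norm_nonneg _)]
  exact pow_le_pow_iff_left₀ (by positivity) (norm_nonneg _) two_ne_zero |>.1 hsq
end

section
variable {R A : Type*} [CommRing R] [Ring A] [Algebra R A]

theorem notMem_spectrum_of_isUnit_sub_smul_one {a : A} {r : R} (h : IsUnit (a - r • 1)) :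
    r ∉ spectrum R a := by
  rw [spectrum.notMem_iff, Algebra.algebraMap_eq_smul_one, ← neg_sub]
  exact h.neg

theorem IsStarNormal.sub_smul_one [StarRing R] [StarRing A] [StarModule R A] {a : A}
    (ha : IsStarNormal a) (r : R) : IsStarNormal (a - r • 1) := by
  have hcomm : Commute a (star (r • (1 : A))) := by
    rw [star_smul, star_one]
    exact (Commute.one_right a).smul_right _
  exact hcomm.isStarNormal_sub
end

theorem IsStarNormal.spectrum_subset_essSpectrum_union_pi00 {A : H →L[ℂ] H}
    (hA : IsStarNormal A) : spectrum ℂ A ⊆ essSpectrum A ∪ pi00 A := by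
  intro z hz
  refine or_iff_not_imp_left.2 fun hzess => ?_
  obtain ⟨hclosed, hfin, -⟩ : IsFredholmOp (A - z • 1) := not_not.1 hzess
  set B := A - z • (1 : H →L[ℂ] H)
  have hB : IsStarNormal B := hA.sub_smul_one z
  obtain ⟨δ, hδ, hlb⟩ := exists_mul_norm_le_of_mem_orthogonal_ker B hclosed
  have hker : B.ker ≠ ⊥ := fun hbot =>
    notMem_spectrum_of_isUnit_sub_smul_one
      (hB.isUnit_of_mul_norm_le hδ fun x => hlb x (by simp [hbot])) hz
  have hisolated : ∀ μ ∈ Metric.ball z (δ / 2), μ ∈ spectrum ℂ A → μ = z := by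
    intro μ hμ hμA
    by_contra hne
    have hshift : A - μ • 1 = B - (μ - z) • 1 := by simp only [B, sub_smul]; abel
    refine notMem_spectrum_of_isUnit_sub_smul_one ?_ hμA
    rw [hshift]
    refine (hB.sub_smul_one _).isUnit_of_mul_norm_le (norm_pos_iff.2 (sub_ne_zero.2 hne))
      (hB.norm_mul_le_norm_sub_smul_apply hlb ?_)
    rw [Metric.mem_ball, dist_eq_norm] at hμ
    linarith
  refine ⟨hz, ⟨Metric.ball z (δ / 2), Metric.isOpen_ball, ?_⟩, hker, hfin⟩
  exact Set.eq_singleton_iff_unique_mem.2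
    ⟨⟨Metric.mem_ball_self (by positivity), hz⟩, fun μ hμ => hisolated μ hμ.1 hμ.2⟩

theorem isSelfAdjoint_opAbs (T : H →L[ℂ] H) : IsSelfAdjoint (opAbs T) :=
  IsSelfAdjoint.of_nonneg (CFC.sqrt_nonneg _)

theorem norm_opAbs_apply (T : H →L[ℂ] H) (x : H) : ‖opAbs T x‖ = ‖T x‖ := by
  have hsq : opAbs T * opAbs T = adjoint T * T :=
    CFC.sqrt_mul_sqrt_self _ (by rw [← star_eq_adjoint]; exact star_mul_self_nonneg T)
  refine (sq_eq_sq₀ (norm_nonneg _) (norm_nonneg _)).1 ?_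
  rw [apply_norm_sq_eq_inner_adjoint_left, apply_norm_sq_eq_inner_adjoint_left,
    (isSelfAdjoint_opAbs T).adjoint_eq, ← ContinuousLinearMap.mul_def, hsq,
    ContinuousLinearMap.mul_def]

theorem exists_isometry_smul_eq_of_norm_apply_eq {E : Type*} [NormedAddCommGroup E]
    [NormedSpace ℂ E] {T : E →L[ℂ] E} (hT : ∀ x, ‖T x‖ = ‖T‖ * ‖x‖) :
    ∃ S : E →L[ℂ] E, (∀ x, ‖S x‖ = ‖x‖) ∧ T = (‖T‖ : ℂ) • S := by
  rcases eq_or_ne T 0 with rfl | hT0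
  · exact ⟨1, fun x => rfl, by simp⟩
  have hpos : (‖T‖ : ℂ) ≠ 0 := by exact_mod_cast (norm_pos_iff.2 hT0).ne'
  refine ⟨(‖T‖ : ℂ)⁻¹ • T, fun x => ?_, by rw [smul_smul, mul_inv_cancel₀ hpos, one_smul]⟩
  rw [smul_apply, norm_smul, hT, norm_inv, Complex.norm_real, norm_norm, inv_mul_cancel_left₀]
  exact_mod_cast hpos

theorem hyponormal_AN_isometry_of_pi00_empty_general (T : H →L[ℂ] H)
    (hess : essSpectrum (opAbs T) = {(‖T‖ : ℂ)})
    (hpi : pi00 (opAbs T) = ∅) :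
    (∃ S₀ : H →L[ℂ] H, (∀ x : H, ‖S₀ x‖ = ‖x‖) ∧ T = (‖T‖ : ℂ) • S₀) ∧
      ∀ x : H, ‖T x‖ = ‖T‖ * ‖x‖ := by
  have hnormal : IsStarNormal (opAbs T) := (isSelfAdjoint_opAbs T).isStarNormal
  have hspec : spectrum ℂ (opAbs T) ⊆ {(‖T‖ : ℂ)} := by
    simpa [hess, hpi] using hnormal.spectrum_subset_essSpectrum_union_pi00
  have habs : opAbs T = (‖T‖ : ℂ) • 1 := by
    rw [CFC.eq_algebraMap_of_spectrum_subset_singleton _ _ hspec hnormal,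
      Algebra.algebraMap_eq_smul_one]
  have hnorm : ∀ x, ‖T x‖ = ‖T‖ * ‖x‖ := fun x => by
    rw [← norm_opAbs_apply, habs, smul_apply, norm_smul, Complex.norm_real, norm_norm,
      one_apply_eq_self]
  exact ⟨exists_isometry_smul_eq_of_norm_apply_eq hnorm, hnorm⟩

/-- A nonzero hyponormal `𝒜𝒩`-operator with `σ_ess(|T|) = {‖T‖}` and empty `π₀₀(|T|)`
is `‖T‖` times an isometry; in particular `‖T x‖ = ‖T‖ ‖x‖` for all `x`. -/
theorem hyponormal_AN_isometry_of_pi00_empty (T : H →L[ℂ] H) (hT : T ≠ 0)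
    (hhypo : Hyponormal T) (hAN : IsANOperator T)
    (hess : essSpectrum (opAbs T) = {(‖T‖ : ℂ)})
    (hpi : pi00 (opAbs T) = ∅) :
    (∃ S₀ : H →L[ℂ] H, (∀ x : H, ‖S₀ x‖ = ‖x‖) ∧ T = (‖T‖ : ℂ) • S₀) ∧
      ∀ x : H, ‖T x‖ = ‖T‖ * ‖x‖ :=
  hyponormal_AN_isometry_of_pi00_empty_general T hess hpi
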